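/- If in the common leaf ordering of T' and S' (rooted binary trees with identical pre-order leaf sequences on leaf set of size N) all subtrees hanging off the left-spine path of T' and the right-spine path of S' have size at most 2N/C for C ≥ 4, and at least one such subtree has size at least N/log n, then there exists a 'good pair': a leaf x and a set Y with |Y| ≥ N/(2 log n), lca_{T'}(Y) ≺ lca_{T'}(Y ∪ {x}), and lca_{S'}(Y) ≺ lca_{S'}(Y ∪ {x}). -/

import Mathlib

/-!
Let `q` be a spine subtree with at least `N / log n` leaves; mirroring both trees swaps the two
spines, so `q` may be taken to hang off the left spine of `t`. Having at least two leaves, `q`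
misses the common left-most leaf `a`. Split `q` between the two subtrees `sl`, `sr` below the
root of `s`. If `sr` receives half of `q`, take `x = a` and `Y = q ∩ sr`. Otherwise `Y = q ∩ sl`
holds half of `q`, and since `q` and `sl` each hold at most half of the leaves but overlap, some
leaf `x` avoids both. Either way `Y` lies in a subtree of `t` and in a subtree of `s` that both
miss `x`, which forces both lcas to rise strictly. When `N / (2 log n) ≤ 1` a singleton works.
-/

/-- Rooted binary trees with leaves labeled by `X` (with designated left/right children). -/
inductive BTree (X : Type) where
  | leaf : X → BTree X
  | node : BTree X → BTree X → BTree X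

namespace BTree

variable {X : Type} [DecidableEq X]

/-- Left-to-right (pre-order) leaf sequence. -/
def seq : BTree X → List X
  | leaf x => [x]
  | node l r => seq l ++ seq r

/-- Leaf set. -/
def leaves (t : BTree X) : Finset X := t.seq.toFinset

/-- Number of leaves. -/
def size (t : BTree X) : ℕ := t.seq.length

/-- A phylogenetic tree: leaves are bijectively labeled (no repeated labels). -/
def Phylo (t : BTree X) : Prop := t.seq.Nodup

def isLeaf : BTree X → Prop
  | leaf _ => True
  | node _ _ => False

/-- A rooted caterpillar: every internal node (including the root) has a leaf child. -/
def isCaterpillar : BTree X → Prop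
  | leaf _ => True
  | node l r => (isLeaf l ∧ isCaterpillar r) ∨ (isLeaf r ∧ isCaterpillar l)

/-- A perfectly balanced binary tree. -/
def isPerfect : BTree X → Prop
  | leaf _ => True
  | node l r => isPerfect l ∧ isPerfect r ∧ size l = size r

/-- Restriction `T|A`: minimal subtree spanning the leaves in `A`, with degree-two
vertices suppressed; `none` if `A` contains no leaf of the tree. -/
def restrict : BTree X → Finset X → Option (BTree X)
  | leaf x, A => if x ∈ A then some (leaf x) else none
  | node l r, A =>
    match restrict l A, restrict r A with
    | some l', some r' => some (node l' r')
    | some l', none => some l'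
    | none, some r' => some r'
    | none, none => none

/-- Nodes of a tree are addressed by root-paths: `false` = go left, `true` = go right.
`subtreeAt t p` is the subtree rooted at the node with address `p` (if it exists). -/
def subtreeAt : BTree X → List Bool → Option (BTree X)
  | t, [] => some t
  | leaf _, _ :: _ => none
  | node l _, false :: p => subtreeAt l p
  | node _ r, true :: p => subtreeAt r p

/-- Address of the least common ancestor of a set of leaves. -/
def lcaPos : BTree X → Finset X → List Bool
  | leaf _, _ => []
  | node l r, A =>
    if A ⊆ l.leaves then false :: lcaPos l A
    else if A ⊆ r.leaves then true :: lcaPos r A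
    else []

/-- `v ⪯ u` in the ancestor order iff the address of `u` is a prefix of the address of `v`.
Two nodes are incomparable if neither address is a prefix of the other. -/
def Incomp (p q : List Bool) : Prop := ¬ p <+: q ∧ ¬ q <+: p

/-- `StrictBelow p q`: the node at address `p` is a strict descendant of the node at `q`. -/
def StrictBelow (p q : List Bool) : Prop := q <+: p ∧ p ≠ q

/-- Identity of rooted phylogenetic trees: label-preserving graph isomorphism
(the left/right designation is irrelevant). -/
def REq : BTree X → BTree X → Prop
  | leaf x, leaf y => x = y
  | node l r, node l' r' => (REq l l' ∧ REq r r') ∨ (REq l r' ∧ REq r l')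
  | _, _ => False

/-- The splits (edge-induced leaf bipartitions, each recorded by both of its sides)
of the unrooted tree obtained by de-rooting `t`. -/
def usplits (t : BTree X) : Set (Finset X) :=
  { A | ∃ p u, t.subtreeAt p = some u ∧ (A = u.leaves ∨ A = t.leaves \ u.leaves) }

/-- `t` and `s` de-root to identical unrooted phylogenetic trees. -/
def UEq (t s : BTree X) : Prop := t.leaves = s.leaves ∧ usplits t = usplits s

/-- Rooted agreement of `t` and `s` on leaf set `A`: `t|A = s|A` as rooted trees. -/
def RAgree (t s : BTree X) (A : Finset X) : Prop :=
  ∃ t' s', t.restrict A = some t' ∧ s.restrict A = some s' ∧ REq t' s'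

/-- Unrooted agreement of (the de-rootings of) `t` and `s` on leaf set `A`. -/
def UAgree (t s : BTree X) (A : Finset X) : Prop :=
  ∃ t' s', t.restrict A = some t' ∧ s.restrict A = some s' ∧ UEq t' s'

/-- `t` de-roots to an unrooted caterpillar. -/
def UCaterpillar (t : BTree X) : Prop := ∃ c : BTree X, isCaterpillar c ∧ UEq c t

/-- The subtrees hanging off the path from the left-most leaf to the root
(`Q_1, …, Q_k` in the paper; `Q_1` is the left-most leaf itself). -/
def leftSpine : BTree X → List (BTree X)
  | leaf x => [leaf x]
  | node l r => leftSpine l ++ [r]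

/-- The subtrees hanging off the path from the root to the right-most leaf
(`R_1, …, R_m` in the paper; `R_m` is the right-most leaf itself). -/
def rightSpine : BTree X → List (BTree X)
  | leaf x => [leaf x]
  | node l r => l :: rightSpine r

/-- Graph distance (number of edges) between leaves `x` and `y` in the unrooted
tree obtained by de-rooting `t` (the suppressed root accounts for the `-1`). -/
def udist (t : BTree X) (x y : X) : ℕ :=
  (lcaPos t {x}).length - (lcaPos t {x, y}).length +
    ((lcaPos t {y}).length - (lcaPos t {x, y}).length) -
    (if lcaPos t {x, y} = [] then 1 else 0)

end BTree

theorem Finset.card_le_card_inter_add_card_inter {α : Type*} [DecidableEq α]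
    {s t u : Finset α} (h : s ⊆ t ∪ u) : s.card ≤ (s ∩ t).card + (s ∩ u).card :=
  calc s.card = (s ∩ t ∪ s ∩ u).card := by
        rw [← Finset.inter_union_distrib_left, Finset.inter_eq_left.mpr h]
    _ ≤ _ := Finset.card_union_le _ _

namespace BTree

variable {X : Type}

def leftmost : BTree X → X
  | leaf x => x
  | node l _ => leftmost l

def mirror : BTree X → BTree X
  | leaf x => leaf x
  | node l r => node (mirror r) (mirror l)

inductive IsSubtree : BTree X → BTree X → Prop
  | refl (t : BTree X) : IsSubtree t t
  | left {u l : BTree X} (r : BTree X) : IsSubtree u l → IsSubtree u (node l r)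
  | right {u r : BTree X} (l : BTree X) : IsSubtree u r → IsSubtree u (node l r)

theorem head?_seq (t : BTree X) : t.seq.head? = some t.leftmost := by
  induction t with
  | leaf x => rfl
  | node l r ihl _ => simp [seq, leftmost, ihl]

theorem leftmost_eq_of_seq_eq {t s : BTree X} (h : t.seq = s.seq) : t.leftmost = s.leftmost :=
  Option.some_injective _ (by rw [← head?_seq, ← head?_seq, h])

theorem leaf_leftmost_mem_leftSpine (t : BTree X) : leaf t.leftmost ∈ t.leftSpine := by
  induction t with
  | leaf x => simp [leftSpine, leftmost]
  | node l r ihl _ => simpa [leftSpine, leftmost] using Or.inl ihl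

theorem isSubtree_of_mem_leftSpine {t q : BTree X} (h : q ∈ t.leftSpine) : IsSubtree q t := by
  induction t with
  | leaf x =>
    rw [leftSpine, List.mem_singleton] at h
    exact h ▸ .refl _
  | node l r ihl _ =>
    rcases List.mem_append.mp h with h | h
    · exact .left r (ihl h)
    · obtain rfl := List.mem_singleton.mp h
      exact .right l (.refl _)

theorem seq_mirror (t : BTree X) : t.mirror.seq = t.seq.reverse := by
  induction t with
  | leaf x => rfl
  | node l r ihl ihr => simp [mirror, seq, ihl, ihr]

theorem leftSpine_mirror (t : BTree X) :
    t.mirror.leftSpine = t.rightSpine.reverse.map mirror := by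
  induction t with
  | leaf x => rfl
  | node l r _ ihr => simp [mirror, leftSpine, rightSpine, ihr]

theorem rightSpine_mirror (t : BTree X) :
    t.mirror.rightSpine = t.leftSpine.reverse.map mirror := by
  induction t with
  | leaf x => rfl
  | node l r ihl _ => simp [mirror, leftSpine, rightSpine, ihl]

theorem strictBelow_map_iff {f : Bool → Bool} (hf : Function.Injective f) {p q : List Bool} :
    StrictBelow (p.map f) (q.map f) ↔ StrictBelow p q := by
  simp only [StrictBelow, List.prefix_map_iff_of_injective hf, ne_eq,
    List.map_inj_right fun _ _ h => hf h]

theorem Phylo.mirror {t : BTree X} (ht : t.Phylo) : t.mirror.Phylo := by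
  rw [Phylo, seq_mirror]
  exact List.nodup_reverse.mpr ht

variable [DecidableEq X]

def GoodPair (t s : BTree X) (x : X) (Y : Finset X) : Prop :=
  StrictBelow (lcaPos t Y) (lcaPos t (insert x Y)) ∧
    StrictBelow (lcaPos s Y) (lcaPos s (insert x Y))

theorem leaves_leaf (x : X) : (leaf x).leaves = {x} := rfl

theorem leaves_node (l r : BTree X) : (node l r).leaves = l.leaves ∪ r.leaves := by
  simp [leaves, seq, List.toFinset_append]

theorem leaves_mirror (t : BTree X) : t.mirror.leaves = t.leaves := by
  simp [leaves, seq_mirror]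

theorem leaves_eq_of_seq_eq {t s : BTree X} (h : t.seq = s.seq) : t.leaves = s.leaves := by
  rw [leaves, leaves, h]

theorem leftmost_mem_leaves (t : BTree X) : t.leftmost ∈ t.leaves := by
  rw [leaves, List.mem_toFinset]
  exact List.mem_of_head? (head?_seq t)

theorem Phylo.node_iff {l r : BTree X} :
    (node l r).Phylo ↔ l.Phylo ∧ r.Phylo ∧ Disjoint l.leaves r.leaves := by
  rw [Phylo, Phylo, Phylo, seq, List.nodup_append', leaves, leaves,
    List.disjoint_toFinset_iff_disjoint]

theorem IsSubtree.leaves_subset {u t : BTree X} (h : IsSubtree u t) : u.leaves ⊆ t.leaves := by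
  induction h with
  | refl => exact subset_rfl
  | left r _ ih => exact ih.trans (leaves_node _ r ▸ Finset.subset_union_left)
  | right l _ ih => exact ih.trans (leaves_node l _ ▸ Finset.subset_union_right)

theorem isSubtree_leaf_of_mem {t : BTree X} {y : X} (h : y ∈ t.leaves) :
    IsSubtree (leaf y) t := by
  induction t with
  | leaf x =>
    rw [leaves_leaf, Finset.mem_singleton] at h
    exact h ▸ .refl _
  | node l r ihl ihr =>
    rcases Finset.mem_union.mp (leaves_node l r ▸ h) with h | h
    · exact .left r (ihl h)
    · exact .right l (ihr h)

theorem eq_leaf_leftmost_of_mem_leftSpine {t q : BTree X} (ht : t.Phylo) (hq : q ∈ t.leftSpine)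
    (h : t.leftmost ∈ q.leaves) : q = leaf t.leftmost := by
  induction t with
  | leaf x => simpa [leftSpine, leftmost] using hq
  | node l r ihl _ =>
    obtain ⟨hl, -, hdisj⟩ := Phylo.node_iff.mp ht
    rcases List.mem_append.mp hq with hq | hq
    · exact ihl hl hq h
    · rw [List.mem_singleton.mp hq] at h
      exact absurd h (Finset.disjoint_left.mp hdisj (leftmost_mem_leaves l))

theorem lcaPos_node_of_subset_left {l r : BTree X} {A : Finset X} (h : A ⊆ l.leaves) :
    lcaPos (node l r) A = false :: lcaPos l A := by
  rw [lcaPos, if_pos h]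

theorem lcaPos_node_of_subset_right {l r : BTree X} {A : Finset X}
    (hd : Disjoint l.leaves r.leaves) (hA : A.Nonempty) (h : A ⊆ r.leaves) :
    lcaPos (node l r) A = true :: lcaPos r A := by
  obtain ⟨a, ha⟩ := hA
  rw [lcaPos, if_neg fun hl => Finset.disjoint_left.mp hd (hl ha) (h ha), if_pos h]

theorem lcaPos_node_of_mem_of_mem {l r : BTree X} {A : Finset X} (hd : Disjoint l.leaves r.leaves)
    {a b : X} (ha : a ∈ A) (hb : b ∈ A) (hal : a ∈ l.leaves) (hbr : b ∈ r.leaves) :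
    lcaPos (node l r) A = [] := by
  rw [lcaPos, if_neg fun h => Finset.disjoint_left.mp hd (h hb) hbr,
    if_neg fun h => Finset.disjoint_left.mp hd hal (h ha)]

theorem lcaPos_mirror {t : BTree X} (ht : t.Phylo) {A : Finset X} (hA : A.Nonempty) :
    lcaPos t.mirror A = (lcaPos t A).map not := by
  induction t with
  | leaf x => rfl
  | node l r ihl ihr =>
    obtain ⟨hl, hr, hd⟩ := Phylo.node_iff.mp ht
    have hd' : Disjoint r.mirror.leaves l.mirror.leaves := by
      rw [leaves_mirror, leaves_mirror]; exact hd.symm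
    show lcaPos (node r.mirror l.mirror) A = _
    by_cases hAl : A ⊆ l.leaves
    · rw [lcaPos_node_of_subset_right hd' hA (by rwa [leaves_mirror]),
        lcaPos_node_of_subset_left hAl, ihl hl]
      rfl
    by_cases hAr : A ⊆ r.leaves
    · rw [lcaPos_node_of_subset_left (by rwa [leaves_mirror]),
        lcaPos_node_of_subset_right hd hA hAr, ihr hr]
      rfl
    rw [lcaPos, lcaPos, if_neg hAl, if_neg hAr, leaves_mirror, leaves_mirror, if_neg hAr,
      if_neg hAl, List.map_nil]

theorem StrictBelow.cons {p q : List Bool} (h : StrictBelow p q) (b : Bool) :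
    StrictBelow (b :: p) (b :: q) :=
  ⟨List.cons_prefix_cons.mpr ⟨rfl, h.1⟩, fun e => h.2 (List.cons.inj e).2⟩

theorem strictBelow_cons_nil (b : Bool) (p : List Bool) : StrictBelow (b :: p) [] :=
  ⟨List.nil_prefix, List.cons_ne_nil b p⟩

/-- `lca Y` lies in `u`, while `lca (Y ∪ {x})` lies strictly above the root of `u`. -/
theorem IsSubtree.strictBelow_lcaPos_insert {u t : BTree X} (hu : IsSubtree u t) (ht : t.Phylo)
    {Y : Finset X} (hY : Y.Nonempty) (hYu : Y ⊆ u.leaves) {x : X} (hx : x ∈ t.leaves)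
    (hxu : x ∉ u.leaves) : StrictBelow (lcaPos t Y) (lcaPos t (insert x Y)) := by
  obtain ⟨y, hy⟩ := hY
  induction hu with
  | refl => exact absurd hx hxu
  | @left l r hu ih =>
    obtain ⟨hl, -, hd⟩ := Phylo.node_iff.mp ht
    have hYl := hYu.trans hu.leaves_subset
    rw [lcaPos_node_of_subset_left hYl]
    rcases Finset.mem_union.mp (leaves_node l r ▸ hx) with hxl | hxr
    · rw [lcaPos_node_of_subset_left (Finset.insert_subset hxl hYl)]
      exact (ih hl hxl).cons false
    · rw [lcaPos_node_of_mem_of_mem hd (Finset.mem_insert_of_mem hy) (Finset.mem_insert_self x Y)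
        (hYl hy) hxr]
      exact strictBelow_cons_nil _ _
  | @right r l hu ih =>
    obtain ⟨-, hr, hd⟩ := Phylo.node_iff.mp ht
    have hYr := hYu.trans hu.leaves_subset
    rw [lcaPos_node_of_subset_right hd ⟨y, hy⟩ hYr]
    rcases Finset.mem_union.mp (leaves_node l r ▸ hx) with hxl | hxr
    · rw [lcaPos_node_of_mem_of_mem hd (Finset.mem_insert_self x Y) (Finset.mem_insert_of_mem hy)
        hxl (hYr hy)]
      exact strictBelow_cons_nil _ _
    · rw [lcaPos_node_of_subset_right hd (Finset.insert_nonempty x Y)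
        (Finset.insert_subset hxr hYr)]
      exact (ih hr hxr).cons true

theorem goodPair_singleton {t s : BTree X} (ht : t.Phylo) (hs : s.Phylo)
    (hleaves : t.leaves = s.leaves) {x y : X} (hx : x ∈ t.leaves) (hy : y ∈ t.leaves)
    (hxy : x ≠ y) : GoodPair t s x {y} := by
  have hxy' : x ∉ (leaf y).leaves := by simpa [leaves_leaf] using hxy
  exact ⟨(isSubtree_leaf_of_mem hy).strictBelow_lcaPos_insert ht (Finset.singleton_nonempty y)
      subset_rfl hx hxy',
    (isSubtree_leaf_of_mem (hleaves ▸ hy)).strictBelow_lcaPos_insert hs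
      (Finset.singleton_nonempty y) subset_rfl (hleaves ▸ hx) hxy'⟩

theorem GoodPair.of_mirror {t s : BTree X} (ht : t.Phylo) (hs : s.Phylo) {x : X} {Y : Finset X}
    (hY : Y.Nonempty) (h : GoodPair s.mirror t.mirror x Y) : GoodPair t s x Y := by
  have hinj : Function.Injective not := Bool.not_injective
  obtain ⟨hs', ht'⟩ := h
  rw [lcaPos_mirror hs hY, lcaPos_mirror hs (Finset.insert_nonempty x Y),
    strictBelow_map_iff hinj] at hs'
  rw [lcaPos_mirror ht hY, lcaPos_mirror ht (Finset.insert_nonempty x Y),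
    strictBelow_map_iff hinj] at ht'
  exact ⟨ht', hs'⟩

theorem exists_goodPair_of_mem_leftSpine {t s q : BTree X} (ht : t.Phylo) (hs : s.Phylo)
    (hseq : t.seq = s.seq) (hq : q ∈ t.leftSpine) (hq2 : 2 ≤ q.leaves.card)
    (hqN : 2 * q.leaves.card ≤ t.leaves.card)
    (hsN : ∀ r ∈ s.rightSpine, 2 * r.leaves.card ≤ t.leaves.card) :
    ∃ (x : X) (Y : Finset X), x ∈ t.leaves ∧ Y ⊆ t.leaves ∧ q.leaves.card ≤ 2 * Y.card ∧
      GoodPair t s x Y := by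
  have hleaves := leaves_eq_of_seq_eq hseq
  obtain ⟨sl, sr, rfl⟩ : ∃ sl sr, s = node sl sr := by
    cases s with
    | leaf y =>
      have : t.leaves.card = 1 := by rw [hleaves]; rfl
      omega
    | node sl sr => exact ⟨sl, sr, rfl⟩
  obtain ⟨-, -, hd⟩ := Phylo.node_iff.mp hs
  have hqt : IsSubtree q t := isSubtree_of_mem_leftSpine hq
  have hsplit := Finset.card_le_card_inter_add_card_inter
    (leaves_node sl sr ▸ hleaves ▸ hqt.leaves_subset : q.leaves ⊆ sl.leaves ∪ sr.leaves)
  by_cases hright : q.leaves.card ≤ 2 * (q.leaves ∩ sr.leaves).card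
  · have hxsl : t.leftmost ∈ sl.leaves := by
      rw [leftmost_eq_of_seq_eq hseq]
      exact leftmost_mem_leaves sl
    have hxq : t.leftmost ∉ q.leaves := fun h => by
      have := congrArg (·.leaves.card) (eq_leaf_leftmost_of_mem_leftSpine ht hq h)
      simp only [leaves_leaf, Finset.card_singleton] at this
      omega
    have hY : (q.leaves ∩ sr.leaves).Nonempty := by
      rw [← Finset.card_pos]
      omega
    refine ⟨t.leftmost, _, leftmost_mem_leaves t,
      Finset.inter_subset_left.trans hqt.leaves_subset, hright, ?_, ?_⟩
    · exact hqt.strictBelow_lcaPos_insert ht hY Finset.inter_subset_left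
        (leftmost_mem_leaves t) hxq
    · exact (IsSubtree.right sl (.refl sr)).strictBelow_lcaPos_insert hs hY
        Finset.inter_subset_right (hleaves ▸ leftmost_mem_leaves t)
        (Finset.disjoint_left.mp hd hxsl)
  · have hleft : q.leaves.card ≤ 2 * (q.leaves ∩ sl.leaves).card := by omega
    have hY : (q.leaves ∩ sl.leaves).Nonempty := by
      rw [← Finset.card_pos]
      omega
    have hcard : (q.leaves ∪ sl.leaves).card < t.leaves.card := by
      have := Finset.card_union_add_card_inter q.leaves sl.leaves
      have := hsN sl List.mem_cons_self
      have := Finset.card_pos.mpr hY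
      omega
    obtain ⟨x, hx, hxqs⟩ := Finset.exists_mem_notMem_of_card_lt_card hcard
    rw [Finset.mem_union, not_or] at hxqs
    refine ⟨x, _, hx, Finset.inter_subset_left.trans hqt.leaves_subset, hleft, ?_, ?_⟩
    · exact hqt.strictBelow_lcaPos_insert ht hY Finset.inter_subset_left hx hxqs.1
    · exact (IsSubtree.left sr (.refl sl)).strictBelow_lcaPos_insert hs hY
        Finset.inter_subset_right (hleaves ▸ hx) hxqs.2

theorem exists_goodPair_of_mem_spines {t s q : BTree X} (ht : t.Phylo) (hs : s.Phylo)
    (hseq : t.seq = s.seq)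
    (hN : ∀ r ∈ t.leftSpine ++ s.rightSpine, 2 * r.leaves.card ≤ t.leaves.card)
    (hq : q ∈ t.leftSpine ++ s.rightSpine) (hq2 : 2 ≤ q.leaves.card) :
    ∃ (x : X) (Y : Finset X), x ∈ t.leaves ∧ Y ⊆ t.leaves ∧ q.leaves.card ≤ 2 * Y.card ∧
      GoodPair t s x Y := by
  have hYne {Y : Finset X} (hY : q.leaves.card ≤ 2 * Y.card) : Y.Nonempty := by
    rw [← Finset.card_pos]
    omega
  rcases List.mem_append.mp hq with hq | hq
  · exact exists_goodPair_of_mem_leftSpine ht hs hseq hq hq2 (hN q (List.mem_append_left _ hq))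
      fun r hr => hN r (List.mem_append_right _ hr)
  · have hleaves : s.mirror.leaves = t.leaves := by rw [leaves_mirror, leaves_eq_of_seq_eq hseq]
    obtain ⟨x, Y, hx, hYs, hqY, hgood⟩ :=
      exists_goodPair_of_mem_leftSpine (t := s.mirror) (s := t.mirror) hs.mirror ht.mirror
        (by rw [seq_mirror, seq_mirror, hseq]) (q := q.mirror)
        (by simpa [leftSpine_mirror] using List.mem_map_of_mem hq)
        (by rwa [leaves_mirror]) (by rw [leaves_mirror, hleaves]; exact hN q (by simp [hq]))
        (by
          rw [rightSpine_mirror, hleaves]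
          intro r hr
          obtain ⟨r, hr', rfl⟩ := List.mem_map.mp hr
          rw [leaves_mirror]
          exact hN r (List.mem_append_left _ (List.mem_reverse.mp hr')))
    rw [leaves_mirror] at hqY
    exact ⟨x, Y, hleaves ▸ hx, hleaves ▸ hYs, hqY, hgood.of_mirror ht hs (hYne hqY)⟩

end BTree

open BTree

/-- Lemma 5: let `t` and `s` be rooted binary trees on the same leaf set of size
`N` with identical pre-order leaf orderings.  If every subtree hanging off the
left spine of `t` or the right spine of `s` has at most `2N/C` leaves (`C ≥ 4`),
and at least one such subtree has at least `N/log₂ n` leaves, then there is a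
"good pair" `(x, Y)`: a leaf `x` and a set `Y` with `|Y| ≥ N/(2 log₂ n)` such
that in both trees `lca(Y)` is a strict descendant of `lca(Y ∪ {x})`. -/
theorem good_pair_exists {X : Type} [DecidableEq X]
    (n : ℕ) (t s : BTree X) (ht : t.Phylo) (hs : s.Phylo) (hseq : t.seq = s.seq)
    (C : ℝ) (hC : 4 ≤ C)
    (hsmall : ∀ q ∈ t.leftSpine ++ s.rightSpine,
      (q.leaves.card : ℝ) ≤ 2 * (t.leaves.card : ℝ) / C)
    (hbig : ∃ q ∈ t.leftSpine ++ s.rightSpine,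
      (t.leaves.card : ℝ) / Real.logb 2 n ≤ (q.leaves.card : ℝ)) :
    ∃ (x : X) (Y : Finset X), x ∈ t.leaves ∧ Y ⊆ t.leaves ∧
      (t.leaves.card : ℝ) / (2 * Real.logb 2 n) ≤ (Y.card : ℝ) ∧
      StrictBelow (lcaPos t Y) (lcaPos t (insert x Y)) ∧
      StrictBelow (lcaPos s Y) (lcaPos s (insert x Y)) := by
  have hhalf : ∀ q ∈ t.leftSpine ++ s.rightSpine, 2 * q.leaves.card ≤ t.leaves.card := by
    intro q hq
    have : 2 * (t.leaves.card : ℝ) / C ≤ 2 * t.leaves.card / 4 :=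
      div_le_div_of_nonneg_left (by positivity) (by norm_num) hC
    have := hsmall q hq
    exact_mod_cast (by linarith : (2 * q.leaves.card : ℝ) ≤ t.leaves.card)
  have hN : 2 ≤ t.leaves.card :=
    hhalf _ (List.mem_append_left _ (leaf_leftmost_mem_leftSpine t))
  by_cases hτ : (t.leaves.card : ℝ) / (2 * Real.logb 2 n) ≤ 1
  · obtain ⟨x, hx, y, hy, hxy⟩ := Finset.one_lt_card.mp hN
    have hgood := goodPair_singleton ht hs (leaves_eq_of_seq_eq hseq) hx hy hxy
    exact ⟨x, {y}, hx, Finset.singleton_subset_iff.mpr hy, by simpa using hτ, hgood⟩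
  · obtain ⟨q, hq, hqbig⟩ := hbig
    have hhalf_q : (t.leaves.card : ℝ) / (2 * Real.logb 2 n) ≤ q.leaves.card / 2 := by
      rw [mul_comm, ← div_div]
      linarith
    have hq2 : 2 ≤ q.leaves.card := by exact_mod_cast (by linarith : (2 : ℝ) ≤ q.leaves.card)
    obtain ⟨x, Y, hx, hY, hqY, hgood⟩ := exists_goodPair_of_mem_spines ht hs hseq hhalf hq hq2
    refine ⟨x, Y, hx, hY, ?_, hgood⟩
    have : (q.leaves.card : ℝ) ≤ 2 * Y.card := by exact_mod_cast hqY
    linarith
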